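/- arXiv:1706.03516 — 2 statements merged into one kernel-verified Lean document; each statement's English description precedes it below -/
import Mathlib

section
/- The generalized Hurwitz-Lerch zeta function of two variables Φ_{μ,η,η',δ,δ';ν,ξ,ξ'}(z,t,s,a) admits the integral representation (1/Γ(s)) ∫₀^∞ x^{s-1} e^{-ax} M₄(μ,η,η',δ,δ'; ν,ξ,ξ'; z e^{-x}, t e^{-x}) dx, for min{Re(s), Re(a)} > 0 and |z| < 1, |t| < 1. -/
open MeasureTheory Set Complex

noncomputable def pch (x : ℂ) (n : ℕ) : ℂ := (ascPochhammer ℂ n).eval x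

/-- The further extended Hurwitz-Lerch zeta function of two variables. -/
noncomputable def Phi (μ η η' δ δ' ν ξ ξ' z t s a : ℂ) : ℂ :=
  ∑' p : ℕ × ℕ,
    (pch μ (p.1 + p.2) * pch η p.1 * pch η' p.2 * pch δ p.1 * pch δ' p.2) /
        (pch ν (p.1 + p.2) * pch ξ p.1 * pch ξ' p.2 * (p.1.factorial : ℂ) *
          (p.2.factorial : ℂ)) *
      (z ^ p.1 * t ^ p.2 / ((p.1 : ℂ) + (p.2 : ℂ) + a) ^ s)

/-- The Appell-type function M₄. -/
noncomputable def M4 (μ η η' δ δ' ν ξ ξ' x y : ℂ) : ℂ :=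
  ∑' p : ℕ × ℕ,
    (pch μ (p.1 + p.2) * pch η p.1 * pch η' p.2 * pch δ p.1 * pch δ' p.2) /
        (pch ν (p.1 + p.2) * pch ξ p.1 * pch ξ' p.2) *
      (x ^ p.1 / (p.1.factorial : ℂ)) * (y ^ p.2 / (p.2.factorial : ℂ))


/-! Expanding `M₄` termwise turns the integral into a double series of integrals
`∫₀^∞ x^(s-1) e^(-(a+k+l)x) dx = Γ(s) (a+k+l)^(-s)`. Summation and integration may be
interchanged because the series converges absolutely: every coefficient is a product of Pochhammer
quotients `(x)ₙ / (y)ₙ`, whose consecutive ratios tend to `1`, so they grow subexponentially while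
`|z|, |t| < 1`. The integral with a complex scale `a + k + l` follows from the real-scale case by
analytic continuation in the scale. -/

open Filter Topology

lemma pch_succ (x : ℂ) (n : ℕ) : pch x (n + 1) = pch x n * (x + n) :=
  ascPochhammer_succ_eval n x

lemma exists_norm_le_mul_pow_of_eventually_norm_succ_le {E : Type*} [SeminormedAddCommGroup E]
    {g : ℕ → E} {ρ : ℝ} (hρ : 0 < ρ) (h : ∀ᶠ n in atTop, ‖g (n + 1)‖ ≤ ρ * ‖g n‖) :
    ∃ C, 0 ≤ C ∧ ∀ n, ‖g n‖ ≤ C * ρ ^ n := by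
  obtain ⟨N, hN⟩ := eventually_atTop.1 h
  set u : ℕ → ℝ := fun n => ‖g n‖ / ρ ^ n
  have hu : ∀ n, u n ≤ u (min n N) := by
    intro n
    induction n with
    | zero => simp
    | succ n ih =>
      rcases le_or_gt (n + 1) N with hn | hn
      · rw [min_eq_left hn]
      · have hstep : u (n + 1) ≤ u n := by
          simp only [u, pow_succ]
          rw [div_le_div_iff₀ (by positivity) (by positivity)]
          nlinarith [hN n (by omega), pow_pos hρ n, norm_nonneg (g n)]
        rw [min_eq_right hn.le]
        rw [min_eq_right (by omega : N ≤ n)] at ih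
        exact hstep.trans ih
  have hu₀ : ∀ n, 0 ≤ u n := fun n => by positivity
  refine ⟨∑ i ∈ Finset.range (N + 1), u i, Finset.sum_nonneg fun i _ => hu₀ i, fun n => ?_⟩
  rw [← div_le_iff₀ (pow_pos hρ n)]
  exact (hu n).trans (Finset.single_le_sum (fun i _ => hu₀ i)
    (Finset.mem_range.2 (Nat.lt_succ_of_le (min_le_right n N))))

lemma exists_norm_le_mul_pow_of_tendsto_ratio {R : Type*} [SeminormedRing R] [NormOneClass R]
    {g q : ℕ → R} (hg : ∀ n, g (n + 1) = g n * q n) (hq : Tendsto q atTop (𝓝 1))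
    {ρ : ℝ} (hρ : 1 < ρ) : ∃ C, 0 ≤ C ∧ ∀ n, ‖g n‖ ≤ C * ρ ^ n := by
  refine exists_norm_le_mul_pow_of_eventually_norm_succ_le (by linarith) ?_
  filter_upwards [hq.norm.eventually (gt_mem_nhds (by rwa [norm_one]))] with n hn
  rw [hg, mul_comm ρ]
  exact (norm_mul_le _ _).trans (mul_le_mul_of_nonneg_left hn.le (norm_nonneg _))

lemma exists_norm_pch_div_pch_le (x y : ℂ) {ρ : ℝ} (hρ : 1 < ρ) :
    ∃ C, 0 ≤ C ∧ ∀ n, ‖pch x n / pch y n‖ ≤ C * ρ ^ n :=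
  exists_norm_le_mul_pow_of_tendsto_ratio (q := fun n => (x + n) / (y + n))
    (fun n => by rw [pch_succ, pch_succ, mul_div_mul_comm])
    (by simpa using tendsto_add_mul_div_add_mul_atTop_nhds x y 1 one_ne_zero) hρ

lemma norm_cpow_mul_cexp_neg_mul (s w : ℂ) {x : ℝ} (hx : 0 < x) :
    ‖(x : ℂ) ^ (s - 1) * cexp (-w * x)‖ = x ^ (s.re - 1) * Real.exp (-w.re * x) := by
  rw [norm_mul, norm_cpow_eq_rpow_re_of_pos hx, norm_exp, sub_re, one_re]
  simp [mul_re]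

lemma continuousOn_cpow_mul_cexp_neg_mul (s w : ℂ) :
    ContinuousOn (fun x : ℝ => (x : ℂ) ^ (s - 1) * cexp (-w * x)) (Ioi 0) :=
  fun x hx => ((continuousAt_ofReal_cpow_const x _ (Or.inr hx.ne')).mul
    (by fun_prop)).continuousWithinAt

lemma integrableOn_rpow_mul_exp_neg_mul {r b : ℝ} (hr : -1 < r) (hb : 0 < b) :
    IntegrableOn (fun x : ℝ => x ^ r * Real.exp (-b * x)) (Ioi 0) := by
  simpa using integrableOn_rpow_mul_exp_neg_mul_rpow hr one_pos hb

lemma integrableOn_cpow_mul_cexp_neg_mul {s w : ℂ} (hs : 0 < s.re) (hw : 0 < w.re) :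
    IntegrableOn (fun x : ℝ => (x : ℂ) ^ (s - 1) * cexp (-w * x)) (Ioi 0) := by
  refine (integrableOn_rpow_mul_exp_neg_mul (r := s.re - 1) (by linarith) hw).mono'
    ((continuousOn_cpow_mul_cexp_neg_mul s w).aestronglyMeasurable measurableSet_Ioi) ?_
  filter_upwards [ae_restrict_mem measurableSet_Ioi] with x hx
    using (norm_cpow_mul_cexp_neg_mul s w hx).le

lemma differentiableOn_integral_cpow_mul_cexp_neg_mul {s : ℂ} (hs : 0 < s.re) :
    DifferentiableOn ℂ (fun w : ℂ => ∫ x in Ioi (0 : ℝ), (x : ℂ) ^ (s - 1) * cexp (-w * x))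
      {w | 0 < w.re} := by
  intro w₀ (hw₀ : 0 < w₀.re)
  have hε : 0 < w₀.re / 2 := by linarith
  have hmeas : ∀ w : ℂ, AEStronglyMeasurable (fun x : ℝ => (x : ℂ) ^ (s - 1) * cexp (-w * x))
      (volume.restrict (Ioi 0)) := fun w =>
    (continuousOn_cpow_mul_cexp_neg_mul s w).aestronglyMeasurable measurableSet_Ioi
  refine (hasDerivAt_integral_of_dominated_loc_of_deriv_le (Metric.ball_mem_nhds w₀ hε)
    (F' := fun w x => -(x : ℂ) * ((x : ℂ) ^ (s - 1) * cexp (-w * x)))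
    (bound := fun x => x ^ s.re * Real.exp (-(w₀.re / 2) * x))
    (Eventually.of_forall hmeas) (integrableOn_cpow_mul_cexp_neg_mul hs hw₀)
    (continuous_ofReal.aestronglyMeasurable.neg.mul (hmeas w₀)) ?_
    (integrableOn_rpow_mul_exp_neg_mul (by linarith) hε) ?_).2.differentiableAt
    |>.differentiableWithinAt
  · filter_upwards [ae_restrict_mem measurableSet_Ioi] with x (hx : 0 < x) w hw
    have hre : w₀.re / 2 ≤ w.re := by
      have := (abs_le.1 ((abs_re_le_norm (w - w₀)).trans (mem_ball_iff_norm.1 hw).le)).1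
      rw [sub_re] at this
      linarith
    rw [norm_mul, norm_neg, norm_real, Real.norm_of_nonneg hx.le,
      norm_cpow_mul_cexp_neg_mul s w hx, Real.rpow_sub_one hx.ne', ← mul_assoc,
      mul_div_cancel₀ _ hx.ne']
    gcongr
  · filter_upwards with x w _
    exact (((hasDerivAt_neg' w).mul_const (x : ℂ)).cexp.const_mul
      ((x : ℂ) ^ (s - 1))).congr_deriv (by ring)

lemma eqOn_re_pos_of_forall_ofReal_eq {E : Type*} [NormedAddCommGroup E] [NormedSpace ℂ E]
    [CompleteSpace E] {f g : ℂ → E} (hf : DifferentiableOn ℂ f {w | 0 < w.re})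
    (hg : DifferentiableOn ℂ g {w | 0 < w.re}) (h : ∀ r : ℝ, 0 < r → f r = g r) :
    EqOn f g {w | 0 < w.re} := by
  have hU : IsOpen {w : ℂ | 0 < w.re} := isOpen_lt continuous_const continuous_re
  refine (hf.analyticOnNhd hU).eqOn_of_preconnected_of_frequently_eq (hg.analyticOnNhd hU)
    (convex_halfSpace_re_gt 0).isPreconnected (z₀ := 1) (by simp) ?_
  have hofReal : Tendsto ((↑) : ℝ → ℂ) (𝓝[≠] 1) (𝓝[≠] 1) :=
    tendsto_nhdsWithin_of_tendsto_nhds_of_eventually_within _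
      (ofReal_one ▸ (continuous_ofReal.tendsto 1).mono_left nhdsWithin_le_nhds)
      (eventually_nhdsWithin_of_forall fun r (hr : r ≠ 1) => by simpa using hr)
  refine hofReal.frequently (Eventually.frequently ?_)
  filter_upwards [nhdsWithin_le_nhds (lt_mem_nhds one_pos)] with r hr using h r hr

theorem integral_cpow_mul_cexp_neg_mul {s w : ℂ} (hs : 0 < s.re) (hw : 0 < w.re) :
    ∫ x in Ioi (0 : ℝ), (x : ℂ) ^ (s - 1) * cexp (-w * x) = Gamma s * w ^ (-s) := by
  refine eqOn_re_pos_of_forall_ofReal_eq (g := fun w => Gamma s * w ^ (-s))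
    (differentiableOn_integral_cpow_mul_cexp_neg_mul hs)
    (fun w (hw : 0 < w.re) => ((differentiableAt_id.cpow (differentiableAt_const _)
      (Or.inl hw)).const_mul _).differentiableWithinAt) (fun r hr => ?_) hw
  simp only [neg_mul]
  rw [integral_cpow_mul_exp_neg_mul_Ioi hs hr, one_div, inv_cpow _ _ (by
    rw [arg_ofReal_of_nonneg hr.le]; exact Real.pi_ne_zero.symm), ← cpow_neg, mul_comm]

theorem hasSum_integral_cpow_mul_of_hasSum_cexp {ι : Type*} [Countable ι] {b w : ι → ℂ}
    {F : ℝ → ℂ} {s : ℂ} (hs : 0 < s.re) (hw : ∀ i, 0 < (w i).re)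
    (hF : ∀ x ∈ Ioi (0 : ℝ), HasSum (fun i => b i * cexp (-w i * x)) (F x))
    (h_sum : Summable fun i => ‖b i‖ / (w i).re ^ s.re) :
    HasSum (fun i => Gamma s * b i / w i ^ s) (∫ x in Ioi (0 : ℝ), (x : ℂ) ^ (s - 1) * F x) := by
  set G : ι → ℝ → ℂ := fun i x => b i * ((x : ℂ) ^ (s - 1) * cexp (-w i * x))
  have hG_int : ∀ i, Integrable (G i) (volume.restrict (Ioi 0)) := fun i =>
    (integrableOn_cpow_mul_cexp_neg_mul hs (hw i)).const_mul (b i)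
  have hG_norm : ∀ i,
      ∫ x in Ioi (0 : ℝ), ‖G i x‖ = Real.Gamma s.re * (‖b i‖ / (w i).re ^ s.re) := by
    intro i
    rw [setIntegral_congr_fun measurableSet_Ioi fun x hx => by
      rw [norm_mul, norm_cpow_mul_cexp_neg_mul s (w i) hx, neg_mul], integral_const_mul,
      Real.integral_rpow_mul_exp_neg_mul_Ioi hs (hw i), one_div, Real.inv_rpow (hw i).le]
    ring
  have hG := hasSum_integral_of_summable_integral_norm hG_int
    (by simp_rw [hG_norm]; exact h_sum.mul_left _)
  rw [setIntegral_congr_fun measurableSet_Ioi fun (x : ℝ) hx =>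
    show (x : ℂ) ^ (s - 1) * F x = ∑' i, G i x from
      (((hF x hx).mul_left _).congr_fun fun i => by simp only [G]; ring).tsum_eq.symm]
  refine hG.congr_fun fun i => ?_
  rw [integral_const_mul, integral_cpow_mul_cexp_neg_mul hs (hw i), cpow_neg]
  ring

lemma exists_one_lt_pow_mul_lt_one {m : ℝ} (hm : m < 1) (n : ℕ) :
    ∃ ρ : ℝ, 1 < ρ ∧ ρ ^ n * m < 1 := by
  have hcont : Tendsto (fun ρ : ℝ => ρ ^ n * m) (𝓝[>] 1) (𝓝 (1 ^ n * m)) :=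
    ((continuous_pow n).mul continuous_const).continuousAt.tendsto.mono_left nhdsWithin_le_nhds
  obtain ⟨ρ, hρm, hρ⟩ :=
    ((hcont.eventually (gt_mem_nhds (by simpa using hm))).and self_mem_nhdsWithin).exists
  exact ⟨ρ, hρ, hρm⟩

section Coefficients

variable (μ η η' δ δ' ν ξ ξ' : ℂ)

noncomputable def phiCoeff (p : ℕ × ℕ) : ℂ :=
  (pch μ (p.1 + p.2) * pch η p.1 * pch η' p.2 * pch δ p.1 * pch δ' p.2) /
    (pch ν (p.1 + p.2) * pch ξ p.1 * pch ξ' p.2 * (p.1.factorial : ℂ) * (p.2.factorial : ℂ))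

lemma phiCoeff_eq (k l : ℕ) :
    phiCoeff μ η η' δ δ' ν ξ ξ' (k, l) =
      pch μ (k + l) / pch ν (k + l) * (pch η k / pch ξ k) * (pch δ k / pch 1 k) *
        (pch η' l / pch ξ' l) * (pch δ' l / pch 1 l) := by
  simp only [phiCoeff, pch, ascPochhammer_eval_one]
  ring

lemma exists_norm_phiCoeff_le {ρ : ℝ} (hρ : 1 < ρ) :
    ∃ C, ∀ k l : ℕ, ‖phiCoeff μ η η' δ δ' ν ξ ξ' (k, l)‖ ≤ C * (ρ ^ 3) ^ k * (ρ ^ 3) ^ l := by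
  obtain ⟨C₁, hC₁, h₁⟩ := exists_norm_pch_div_pch_le μ ν hρ
  obtain ⟨C₂, hC₂, h₂⟩ := exists_norm_pch_div_pch_le η ξ hρ
  obtain ⟨C₃, hC₃, h₃⟩ := exists_norm_pch_div_pch_le δ 1 hρ
  obtain ⟨C₄, hC₄, h₄⟩ := exists_norm_pch_div_pch_le η' ξ' hρ
  obtain ⟨C₅, hC₅, h₅⟩ := exists_norm_pch_div_pch_le δ' 1 hρ
  refine ⟨C₁ * C₂ * C₃ * C₄ * C₅, fun k l => ?_⟩
  rw [phiCoeff_eq]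
  simp only [norm_mul]
  calc _ ≤ (C₁ * ρ ^ (k + l)) * (C₂ * ρ ^ k) * (C₃ * ρ ^ k) * (C₄ * ρ ^ l) * (C₅ * ρ ^ l) := by
        gcongr
        exacts [h₁ _, h₂ _, h₃ _, h₄ _, h₅ _]
    _ = C₁ * C₂ * C₃ * C₄ * C₅ * (ρ ^ 3) ^ k * (ρ ^ 3) ^ l := by ring

lemma summable_norm_phiCoeff_mul_pow {x y : ℂ} (hx : ‖x‖ < 1) (hy : ‖y‖ < 1) :
    Summable fun p : ℕ × ℕ => ‖phiCoeff μ η η' δ δ' ν ξ ξ' p * x ^ p.1 * y ^ p.2‖ := by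
  obtain ⟨ρ, hρ, hρxy⟩ := exists_one_lt_pow_mul_lt_one (max_lt hx hy) 3
  have hρx : ρ ^ 3 * ‖x‖ < 1 := lt_of_le_of_lt (by gcongr; exact le_max_left _ _) hρxy
  have hρy : ρ ^ 3 * ‖y‖ < 1 := lt_of_le_of_lt (by gcongr; exact le_max_right _ _) hρxy
  obtain ⟨C, hC⟩ := exists_norm_phiCoeff_le μ η η' δ δ' ν ξ ξ' hρ
  have hgeom := (summable_geometric_of_lt_one (by positivity) hρx).mul_of_nonneg
    (summable_geometric_of_lt_one (by positivity) hρy) (fun _ => by positivity)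
    (fun _ => by positivity)
  refine Summable.of_nonneg_of_le (fun _ => norm_nonneg _) (fun p => ?_) (hgeom.mul_left C)
  calc ‖phiCoeff μ η η' δ δ' ν ξ ξ' p * x ^ p.1 * y ^ p.2‖
      = ‖phiCoeff μ η η' δ δ' ν ξ ξ' (p.1, p.2)‖ * ‖x‖ ^ p.1 * ‖y‖ ^ p.2 := by
        simp only [norm_mul, norm_pow]
    _ ≤ C * (ρ ^ 3) ^ p.1 * (ρ ^ 3) ^ p.2 * ‖x‖ ^ p.1 * ‖y‖ ^ p.2 := by gcongr; exact hC _ _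
    _ = C * ((ρ ^ 3 * ‖x‖) ^ p.1 * (ρ ^ 3 * ‖y‖) ^ p.2) := by ring

lemma M4_eq_tsum (x y : ℂ) :
    M4 μ η η' δ δ' ν ξ ξ' x y =
      ∑' p : ℕ × ℕ, phiCoeff μ η η' δ δ' ν ξ ξ' p * x ^ p.1 * y ^ p.2 :=
  tsum_congr fun p => by simp only [phiCoeff]; ring

lemma hasSum_phiCoeff_mul_cexp {z t : ℂ} (hz : ‖z‖ < 1) (ht : ‖t‖ < 1) (a : ℂ) {x : ℝ}
    (hx : 0 ≤ x) :
    HasSum (fun p : ℕ × ℕ => phiCoeff μ η η' δ δ' ν ξ ξ' p * z ^ p.1 * t ^ p.2 *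
        cexp (-(a + p.1 + p.2) * x))
      (cexp (-a * x) * M4 μ η η' δ δ' ν ξ ξ' (z * cexp (-x)) (t * cexp (-x))) := by
  have hexp : ‖cexp (-x)‖ ≤ 1 := by
    rw [← ofReal_neg, ← ofReal_exp, norm_real, Real.norm_of_nonneg (Real.exp_pos _).le]
    exact Real.exp_le_one_iff.2 (neg_nonpos.2 hx)
  have hlt : ∀ w : ℂ, ‖w‖ < 1 → ‖w * cexp (-x)‖ < 1 := fun w hw => by
    rw [norm_mul]; nlinarith [norm_nonneg w, norm_nonneg (cexp (-x))]
  rw [M4_eq_tsum]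
  refine ((summable_norm_phiCoeff_mul_pow μ η η' δ δ' ν ξ ξ' (hlt z hz) (hlt t ht)).of_norm
    |>.hasSum.mul_left (cexp (-a * x))).congr_fun fun p => ?_
  rw [show -(a + p.1 + p.2) * (x : ℂ) = -a * x + p.1 * -x + p.2 * -x by ring, exp_add, exp_add,
    exp_nat_mul, exp_nat_mul]
  ring

end Coefficients

theorem Phi_integral_rep_general (μ η η' δ δ' ν ξ ξ' z t s a : ℂ)
    (hs : 0 < s.re) (ha' : 0 < a.re)
    (hz : ‖z‖ < 1) (ht : ‖t‖ < 1) :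
    Phi μ η η' δ δ' ν ξ ξ' z t s a =
      (1 / Complex.Gamma s) *
        ∫ x in Ioi (0 : ℝ),
          (x : ℂ) ^ (s - 1) * Complex.exp (-a * x) *
            M4 μ η η' δ δ' ν ξ ξ' (z * Complex.exp (-x)) (t * Complex.exp (-x)) := by
  have hre : ∀ p : ℕ × ℕ, a.re ≤ (a + p.1 + p.2).re := fun p => by
    simp only [add_re, natCast_re]
    linarith [(p.1.cast_nonneg : (0 : ℝ) ≤ p.1), (p.2.cast_nonneg : (0 : ℝ) ≤ p.2)]
  have hw : ∀ p : ℕ × ℕ, 0 < (a + p.1 + p.2).re := fun p => ha'.trans_le (hre p)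
  have h_sum : Summable fun p : ℕ × ℕ =>
      ‖phiCoeff μ η η' δ δ' ν ξ ξ' p * z ^ p.1 * t ^ p.2‖ / (a + p.1 + p.2).re ^ s.re := by
    refine ((summable_norm_phiCoeff_mul_pow μ η η' δ δ' ν ξ ξ' hz ht).div_const
      (a.re ^ s.re)).of_nonneg_of_le
      (fun p => div_nonneg (norm_nonneg _) (Real.rpow_nonneg (hw p).le _)) fun p =>
        div_le_div_of_nonneg_left (norm_nonneg _) (Real.rpow_pos_of_pos ha' _)
          (Real.rpow_le_rpow ha'.le (hre p) hs.le)
  have hmellin := hasSum_integral_cpow_mul_of_hasSum_cexp hs hw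
    (fun x hx => hasSum_phiCoeff_mul_cexp μ η η' δ δ' ν ξ ξ' hz ht a (le_of_lt hx)) h_sum
  simp_rw [mul_assoc ((_ : ℂ) ^ (s - 1))]
  rw [← hmellin.tsum_eq, ← tsum_mul_left]
  refine tsum_congr fun p => ?_
  have hΓ := Gamma_ne_zero_of_re_pos hs
  show phiCoeff μ η η' δ δ' ν ξ ξ' p * _ = _
  rw [show (p.1 : ℂ) + p.2 + a = a + p.1 + p.2 by ring]
  field_simp

theorem Phi_integral_rep (μ η η' δ δ' ν ξ ξ' z t s a : ℂ)
    (hν : ∀ n : ℕ, ν ≠ -(n : ℂ)) (hξ : ∀ n : ℕ, ξ ≠ -(n : ℂ))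
    (hξ' : ∀ n : ℕ, ξ' ≠ -(n : ℂ)) (ha : ∀ n : ℕ, a ≠ -(n : ℂ))
    (hs : 0 < s.re) (ha' : 0 < a.re)
    (hz : ‖z‖ < 1) (ht : ‖t‖ < 1) :
    Phi μ η η' δ δ' ν ξ ξ' z t s a =
      (1 / Complex.Gamma s) *
        ∫ x in Ioi (0 : ℝ),
          (x : ℂ) ^ (s - 1) * Complex.exp (-a * x) *
            M4 μ η η' δ δ' ν ξ ξ' (z * Complex.exp (-x)) (t * Complex.exp (-x)) :=
  Phi_integral_rep_general μ η η' δ δ' ν ξ ξ' z t s a hs ha' hz ht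
end

section
/- For Re(ν) > Re(μ) > 0 and |z| < 1, |t| < 1, the generalized Hurwitz-Lerch zeta function satisfies Φ_{μ,η,η',δ,δ';ν,ξ,ξ'}(z,t,s,a) = (Γ(ν)/(Γ(μ)Γ(ν-μ))) ∫₀^∞ (y^{μ-1}/(1+y)^ν) Ψ(zy/(1+y), ty/(1+y), s, a) dy, where Ψ(u,v,s,a) = ∑_{k,l≥0} (η)_k(η')_l(δ)_k(δ')_l/((ξ)_k(ξ')_l k! l!) · u^k v^l/(k+l+a)^s. -/
open MeasureTheory Set Complex

/-- The inner zeta-type function Ψ. -/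
noncomputable def Psi (η η' δ δ' ξ ξ' u v s a : ℂ) : ℂ :=
  ∑' p : ℕ × ℕ,
    (pch η p.1 * pch η' p.2 * pch δ p.1 * pch δ' p.2) /
        (pch ξ p.1 * pch ξ' p.2 * (p.1.factorial : ℂ) * (p.2.factorial : ℂ)) *
      (u ^ p.1 * v ^ p.2 / ((p.1 : ℂ) + (p.2 : ℂ) + a) ^ s)

/-!
Substituting `y = x / (1 - x)` turns the integral into
`∫₀¹ x^(μ-1) (1-x)^(ν-μ-1) Ψ(zx, tx, s, a) dx`. The double series of `Ψ(zx, tx)` is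
`∑ ψ_{k,l}(z, t) x^(k+l)`, and `∑ ‖ψ_{k,l}(z, t)‖` converges: the one-variable hypergeometric
coefficients have radius of convergence at least `1`, and `(k+l+a)^(-s)` grows more slowly than
any `R^(k+l)` with `R > 1`. So the series may be integrated termwise against the Beta kernel, and
`Γ(ν) / (Γ(μ) Γ(ν-μ)) · B(μ+n, ν-μ) = (μ)_n / (ν)_n` turns the result into the series of `Φ`.
-/

open Filter

lemma norm_cpow_le_rpow_mul_exp (z w : ℂ) : ‖z ^ w‖ ≤ ‖z‖ ^ w.re * Real.exp (Real.pi * |w.im|) := by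
  refine (norm_cpow_le z w).trans ?_
  rw [div_eq_mul_inv, ← Real.exp_neg]
  gcongr
  calc -(arg z * w.im) ≤ |arg z| * |w.im| := by rw [← abs_mul]; exact neg_le_abs _
    _ ≤ Real.pi * |w.im| := by gcongr; exact abs_arg_le_pi z

lemma exists_norm_cpow_inv_le_mul_pow (a s : ℂ) {R : ℝ} (hR : 1 < R) :
    ∃ C, ∀ n : ℕ, ‖((n : ℂ) + a) ^ s‖⁻¹ ≤ C * R ^ n := by
  set b := Real.log R
  have hb : 0 < b := Real.log_pos hR
  have hnorm : Tendsto (fun n : ℕ ↦ ‖(n : ℂ) + a‖) atTop atTop := by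
    refine tendsto_atTop_mono (fun n ↦ ?_) (tendsto_atTop_add_const_right _ (-‖a‖)
      tendsto_natCast_atTop_atTop)
    simpa [sub_eq_add_neg] using norm_sub_norm_le (n : ℂ) (-a)
  obtain ⟨M, hM⟩ := ((tendsto_rpow_mul_exp_neg_mul_atTop_nhds_zero (-s.re) b hb).comp
    hnorm).bddAbove_range
  refine ⟨Real.exp (Real.pi * |s.im|) * (M * Real.exp (b * ‖a‖)), fun n ↦ ?_⟩
  have hMn : ‖(n : ℂ) + a‖ ^ (-s.re) * Real.exp (-b * ‖(n : ℂ) + a‖) ≤ M := hM ⟨n, rfl⟩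
  have hM0 : 0 ≤ M := le_trans (by positivity) hMn
  have hRn : R ^ n = Real.exp (b * n) := by
    rw [mul_comm, Real.exp_nat_mul, Real.exp_log (by linarith)]
  have hna : ‖(n : ℂ) + a‖ ≤ n + ‖a‖ := by simpa using norm_add_le (n : ℂ) a
  calc ‖((n : ℂ) + a) ^ s‖⁻¹ = ‖((n : ℂ) + a) ^ (-s)‖ := by rw [cpow_neg, norm_inv]
    _ ≤ ‖(n : ℂ) + a‖ ^ (-s.re) * Real.exp (Real.pi * |s.im|) := by
      simpa using norm_cpow_le_rpow_mul_exp ((n : ℂ) + a) (-s)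
    _ = Real.exp (Real.pi * |s.im|) * ((‖(n : ℂ) + a‖ ^ (-s.re) * Real.exp (-b * ‖(n : ℂ) + a‖)) *
        Real.exp (b * ‖(n : ℂ) + a‖)) := by
      rw [mul_assoc _ (Real.exp _), ← Real.exp_add, neg_mul, neg_add_cancel, Real.exp_zero,
        mul_one, mul_comm]
    _ ≤ Real.exp (Real.pi * |s.im|) * (M * Real.exp (b * (n + ‖a‖))) := by gcongr
    _ = _ := by rw [hRn, mul_add, Real.exp_add]; ring

lemma one_le_radius_ordinaryHypergeometricSeries (a b c : ℂ) :
    1 ≤ (ordinaryHypergeometricSeries ℂ a b c).radius := by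
  by_cases ha : ∃ k : ℕ, a = -k
  · obtain ⟨k, rfl⟩ := ha; simp [ordinaryHypergeometric_radius_top_of_neg_nat₁]
  by_cases hb : ∃ k : ℕ, b = -k
  · obtain ⟨k, rfl⟩ := hb; simp [ordinaryHypergeometric_radius_top_of_neg_nat₂]
  by_cases hc : ∃ k : ℕ, c = -k
  · obtain ⟨k, rfl⟩ := hc; simp [ordinaryHypergeometric_radius_top_of_neg_nat₃]
  push Not at ha hb hc
  rw [ordinaryHypergeometricSeries_radius_eq_one]
  intro k
  refine ⟨fun h ↦ ha k ?_, fun h ↦ hb k ?_, fun h ↦ hc k ?_⟩ <;> rw [h, neg_neg]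

lemma summable_norm_hypergeometricCoeff_mul_pow (a b c : ℂ) {r : ℝ} (hr0 : 0 ≤ r) (hr : r < 1) :
    Summable fun k : ℕ ↦ ‖pch a k * pch b k / (pch c k * k.factorial)‖ * r ^ k := by
  lift r to NNReal using hr0
  have hlt : (r : ENNReal) < (ordinaryHypergeometricSeries ℂ a b c).radius :=
    lt_of_lt_of_le (by exact_mod_cast hr) (one_le_radius_ordinaryHypergeometricSeries a b c)
  convert (ordinaryHypergeometricSeries ℂ a b c).summable_norm_mul_pow hlt using 3 with k
  rw [ordinaryHypergeometricSeries, FormalMultilinearSeries.ofScalars_norm, pch, pch, pch]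
  congr 1
  ring

noncomputable def psiTerm (η η' δ δ' ξ ξ' u v s a : ℂ) (p : ℕ × ℕ) : ℂ :=
  (pch η p.1 * pch η' p.2 * pch δ p.1 * pch δ' p.2) /
      (pch ξ p.1 * pch ξ' p.2 * (p.1.factorial : ℂ) * (p.2.factorial : ℂ)) *
    (u ^ p.1 * v ^ p.2 / ((p.1 : ℂ) + (p.2 : ℂ) + a) ^ s)

lemma psiTerm_mul_mul (η η' δ δ' ξ ξ' u v s a x : ℂ) (p : ℕ × ℕ) :
    psiTerm η η' δ δ' ξ ξ' (u * x) (v * x) s a p =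
      psiTerm η η' δ δ' ξ ξ' u v s a p * x ^ (p.1 + p.2) := by
  simp only [psiTerm]
  ring

lemma summable_norm_psiTerm (η η' δ δ' ξ ξ' s a : ℂ) {u v : ℂ} (hu : ‖u‖ < 1) (hv : ‖v‖ < 1) :
    Summable fun p ↦ ‖psiTerm η η' δ δ' ξ ξ' u v s a p‖ := by
  set m := max ‖u‖ ‖v‖
  have hm : m < 1 := max_lt hu hv
  set R := 2 / (1 + m)
  have hR : 1 < R := by rw [one_lt_div (by positivity)]; linarith
  have hRu : ‖u‖ * R < 1 := by
    rw [mul_div_assoc', div_lt_one (by positivity)]; linarith [le_max_left ‖u‖ ‖v‖]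
  have hRv : ‖v‖ * R < 1 := by
    rw [mul_div_assoc', div_lt_one (by positivity)]; linarith [le_max_right ‖u‖ ‖v‖]
  obtain ⟨C, hC⟩ := exists_norm_cpow_inv_le_mul_pow a s hR
  set A : ℕ → ℝ := fun k ↦ ‖pch η k * pch δ k / (pch ξ k * k.factorial)‖ * (‖u‖ * R) ^ k
  set B : ℕ → ℝ := fun l ↦ ‖pch η' l * pch δ' l / (pch ξ' l * l.factorial)‖ * (‖v‖ * R) ^ l
  have hAB : Summable fun p : ℕ × ℕ ↦ A p.1 * B p.2 :=
    (summable_norm_hypergeometricCoeff_mul_pow η δ ξ (by positivity) hRu).mul_of_nonneg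
      (summable_norm_hypergeometricCoeff_mul_pow η' δ' ξ' (by positivity) hRv)
      (fun _ ↦ by positivity) (fun _ ↦ by positivity)
  refine .of_nonneg_of_le (fun _ ↦ norm_nonneg _) (fun ⟨k, l⟩ ↦ ?_) (hAB.mul_left C)
  have hterm : psiTerm η η' δ δ' ξ ξ' u v s a (k, l) =
      pch η k * pch δ k / (pch ξ k * k.factorial) * u ^ k *
        (pch η' l * pch δ' l / (pch ξ' l * l.factorial) * v ^ l) *
          ((((k + l : ℕ) : ℂ) + a) ^ s)⁻¹ := by
    simp only [psiTerm]; push_cast; ring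
  calc ‖psiTerm η η' δ δ' ξ ξ' u v s a (k, l)‖
    _ = ‖pch η k * pch δ k / (pch ξ k * k.factorial)‖ * ‖u‖ ^ k *
        (‖pch η' l * pch δ' l / (pch ξ' l * l.factorial)‖ * ‖v‖ ^ l) *
          ‖(((k + l : ℕ) : ℂ) + a) ^ s‖⁻¹ := by
      rw [hterm]; simp only [norm_mul, norm_pow, norm_inv]
    _ ≤ ‖pch η k * pch δ k / (pch ξ k * k.factorial)‖ * ‖u‖ ^ k *
        (‖pch η' l * pch δ' l / (pch ξ' l * l.factorial)‖ * ‖v‖ ^ l) * (C * R ^ (k + l)) := by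
      gcongr; exact hC _
    _ = C * (A k * B l) := by simp only [A, B]; ring

lemma Gamma_div_mul_betaIntegral_add_nat {μ ν : ℂ} (hμ : 0 < μ.re) (hμν : μ.re < ν.re) (n : ℕ) :
    Gamma ν / (Gamma μ * Gamma (ν - μ)) * betaIntegral (μ + n) (ν - μ) = pch μ n / pch ν n := by
  have hν : 0 < ν.re := hμ.trans hμν
  have hνμ : 0 < (ν - μ).re := by rw [sub_re]; linarith
  have hμn : 0 < (μ + n).re := by simp only [add_re, natCast_re]; positivity
  have hΓ := Gamma_mul_Gamma_eq_betaIntegral hμn hνμ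
  rw [show μ + n + (ν - μ) = ν + n by ring] at hΓ
  have hΓνn : Gamma (ν + n) ≠ 0 :=
    Gamma_ne_zero_of_re_pos (by simp only [add_re, natCast_re]; positivity)
  rw [pch, pch, ← Gamma_add_nat_div_Gamma_eq μ (fun k ↦ by rintro rfl; exact absurd hμ (by simp)),
    ← Gamma_add_nat_div_Gamma_eq ν (fun k ↦ by rintro rfl; exact absurd hν (by simp))]
  have hΓμ := Gamma_ne_zero_of_re_pos hμ
  have hΓν := Gamma_ne_zero_of_re_pos hν
  have hΓνμ := Gamma_ne_zero_of_re_pos hνμ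
  field_simp
  linear_combination -hΓ

lemma integrableOn_Ioo_betaKernel {u v : ℂ} (hu : 0 < u.re) (hv : 0 < v.re) :
    IntegrableOn (fun x : ℝ ↦ (x : ℂ) ^ (u - 1) * (1 - (x : ℂ)) ^ (v - 1)) (Ioo 0 1) := by
  rw [← intervalIntegrable_iff_integrableOn_Ioo_of_le zero_le_one]
  exact betaIntegral_convergent hu hv

lemma betaIntegral_eq_integral_Ioo (u v : ℂ) :
    betaIntegral u v = ∫ x in Ioo (0 : ℝ) 1, (x : ℂ) ^ (u - 1) * (1 - (x : ℂ)) ^ (v - 1) := by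
  rw [betaIntegral, intervalIntegral.integral_of_le zero_le_one, integral_Ioc_eq_integral_Ioo]

lemma betaKernel_mul_pow {x : ℝ} (hx : 0 < x) (u v : ℂ) (n : ℕ) :
    (x : ℂ) ^ (u - 1) * (1 - (x : ℂ)) ^ (v - 1) * (x : ℂ) ^ n =
      (x : ℂ) ^ (u + n - 1) * (1 - (x : ℂ)) ^ (v - 1) := by
  rw [show u + n - 1 = u - 1 + n by ring, cpow_add _ _ (ofReal_ne_zero.mpr hx.ne'),
    cpow_natCast]
  ring

lemma integral_betaKernel_mul_tsum {ι : Type*} [Countable ι] {u v : ℂ} (hu : 0 < u.re)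
    (hv : 0 < v.re) (c : ι → ℂ) (d : ι → ℕ) (hc : Summable fun i ↦ ‖c i‖) :
    ∫ x in Ioo (0 : ℝ) 1, (x : ℂ) ^ (u - 1) * (1 - (x : ℂ)) ^ (v - 1) * ∑' i, c i * (x : ℂ) ^ d i =
      ∑' i, c i * betaIntegral (u + d i) v := by
  set K : ℝ → ℂ := fun x ↦ (x : ℂ) ^ (u - 1) * (1 - (x : ℂ)) ^ (v - 1)
  set F : ι → ℝ → ℂ := fun i x ↦ c i * (K x * (x : ℂ) ^ d i)
  have hF : ∀ i, EqOn (F i)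
      (fun x : ℝ ↦ c i * ((x : ℂ) ^ (u + d i - 1) * (1 - (x : ℂ)) ^ (v - 1))) (Ioo 0 1) :=
    fun i x hx ↦ by simp only [F, K, betaKernel_mul_pow hx.1]
  have hu' : ∀ i, 0 < (u + d i).re := fun i ↦ by simp only [add_re, natCast_re]; positivity
  have hF_int : ∀ i, IntegrableOn (F i) (Ioo 0 1) :=
    fun i ↦ IntegrableOn.congr_fun ((integrableOn_Ioo_betaKernel (hu' i) hv).const_mul (c i))
      (hF i).symm measurableSet_Ioo
  have hF_norm : ∀ i, ∫ x in Ioo (0 : ℝ) 1, ‖F i x‖ ≤ ‖c i‖ * ∫ x in Ioo (0 : ℝ) 1, ‖K x‖ := by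
    intro i
    rw [← integral_const_mul]
    refine setIntegral_mono_on (hF_int i).norm
      ((integrableOn_Ioo_betaKernel hu hv).norm.const_mul _) measurableSet_Ioo fun x hx ↦ ?_
    simp only [F, norm_mul, norm_pow, norm_real, Real.norm_of_nonneg hx.1.le]
    gcongr
    exact mul_le_of_le_one_right (norm_nonneg _) (pow_le_one₀ hx.1.le hx.2.le)
  have hF_sum : Summable fun i ↦ ∫ x in Ioo (0 : ℝ) 1, ‖F i x‖ :=
    .of_nonneg_of_le (fun i ↦ integral_nonneg fun _ ↦ norm_nonneg _) hF_norm
      (hc.mul_right _)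
  calc ∫ x in Ioo (0 : ℝ) 1, K x * ∑' i, c i * (x : ℂ) ^ d i
    _ = ∫ x in Ioo (0 : ℝ) 1, ∑' i, F i x := by
      congr 1 with x; rw [← tsum_mul_left]; congr 1 with i; simp only [F]; ring
    _ = ∑' i, ∫ x in Ioo (0 : ℝ) 1, F i x :=
      (integral_tsum_of_summable_integral_norm hF_int hF_sum).symm
    _ = ∑' i, c i * betaIntegral (u + d i) v := by
      congr 1 with i
      rw [setIntegral_congr_fun measurableSet_Ioo (hF i), integral_const_mul,
        betaIntegral_eq_integral_Ioo]

lemma integral_Ioi_eq_integral_Ioo_div_one_sub (g : ℝ → ℂ) :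
    ∫ y in Ioi (0 : ℝ), g y = ∫ x in Ioo (0 : ℝ) 1, ((1 - x) ^ 2)⁻¹ • g (x / (1 - x)) := by
  have himg : (fun x : ℝ ↦ x / (1 - x)) '' Ioo 0 1 = Ioi 0 := by
    ext y
    constructor
    · rintro ⟨x, ⟨hx0, hx1⟩, rfl⟩
      exact div_pos hx0 (by linarith)
    · intro hy
      have hy0 : (0 : ℝ) < y := hy
      refine ⟨y / (1 + y), ⟨by positivity, by rw [div_lt_one (by linarith)]; linarith⟩, ?_⟩
      field_simp
      ring
  have hderiv : ∀ x ∈ Ioo (0 : ℝ) 1,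
      HasDerivWithinAt (fun x : ℝ ↦ x / (1 - x)) ((1 - x) ^ 2)⁻¹ (Ioo 0 1) x := by
    intro x ⟨_, hx1⟩
    have hb : 1 - x ≠ 0 := by linarith
    have h := (hasDerivAt_id x).div ((hasDerivAt_id x).const_sub 1) hb
    rw [show (1 * (1 - id x) - id x * -1) / (1 - id x) ^ 2 = ((1 - x) ^ 2)⁻¹ by
      simp only [id]; field_simp; ring] at h
    exact h.hasDerivWithinAt
  have hinj : InjOn (fun x : ℝ ↦ x / (1 - x)) (Ioo 0 1) := by
    rintro x ⟨_, hx1⟩ y ⟨_, hy1⟩ h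
    have : 1 - x ≠ 0 := by linarith
    have : 1 - y ≠ 0 := by linarith
    dsimp only at h
    field_simp at h
    linarith
  rw [← himg, integral_image_eq_integral_abs_deriv_smul measurableSet_Ioo hderiv hinj]
  refine setIntegral_congr_fun measurableSet_Ioo fun x _ ↦ ?_
  rw [abs_inv, abs_pow, sq_abs]

lemma inv_sq_mul_cpow_div_one_add_cpow {x : ℝ} (hx : x ∈ Ioo (0 : ℝ) 1) (μ ν : ℂ) :
    (((1 - x) ^ 2)⁻¹ : ℝ) * ((((x / (1 - x)) : ℝ) : ℂ) ^ (μ - 1) /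
        (1 + (((x / (1 - x)) : ℝ) : ℂ)) ^ ν) =
      (x : ℂ) ^ (μ - 1) * (1 - (x : ℂ)) ^ (ν - μ - 1) := by
  obtain ⟨hx0, hx1⟩ := hx
  have hw : 0 < 1 - x := by linarith
  set w : ℂ := ((1 - x : ℝ) : ℂ)
  have hw0 : w ≠ 0 := ofReal_ne_zero.mpr hw.ne'
  have harg : w.arg ≠ Real.pi := by
    rw [arg_ofReal_of_nonneg hw.le]; exact Real.pi_ne_zero.symm
  have hy : (((x / (1 - x)) : ℝ) : ℂ) ^ (μ - 1) = (x : ℂ) ^ (μ - 1) * (w ^ (μ - 1))⁻¹ := by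
    rw [div_eq_mul_inv, ofReal_mul, mul_cpow_ofReal_nonneg hx0.le (inv_nonneg.mpr hw.le),
      ofReal_inv, inv_cpow _ _ harg]
  have h1y : 1 + (((x / (1 - x)) : ℝ) : ℂ) = w⁻¹ := by
    rw [← ofReal_one, ← ofReal_add, ← ofReal_inv]
    congr 1
    field_simp
    ring
  have hpow : ((w ^ 2) * w ^ (μ - 1))⁻¹ * w ^ ν = w ^ (ν - μ - 1) := by
    rw [← cpow_natCast w 2, ← cpow_add _ _ hw0, mul_comm, ← div_eq_mul_inv, ← cpow_sub _ _ hw0]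
    congr 1
    push_cast
    ring
  rw [h1y, hy, inv_cpow _ _ harg, ofReal_inv, ofReal_pow, show (1 : ℂ) - x = w by simp [w],
    ← hpow]
  rw [div_inv_eq_mul]
  simp only [w]
  ring

lemma integral_Ioi_cpow_div_one_add_cpow_mul (μ ν : ℂ) (f : ℝ → ℂ) :
    ∫ y in Ioi (0 : ℝ), (y : ℂ) ^ (μ - 1) / (1 + (y : ℂ)) ^ ν * f (y / (1 + y)) =
      ∫ x in Ioo (0 : ℝ) 1, (x : ℂ) ^ (μ - 1) * (1 - (x : ℂ)) ^ (ν - μ - 1) * f x := by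
  rw [integral_Ioi_eq_integral_Ioo_div_one_sub]
  refine setIntegral_congr_fun measurableSet_Ioo fun x hx ↦ ?_
  have hx1 : 1 - x ≠ 0 := by linarith [hx.2]
  have hxy : x / (1 - x) / (1 + x / (1 - x)) = x := by field_simp; ring
  rw [real_smul, hxy, ← mul_assoc, inv_sq_mul_cpow_div_one_add_cpow hx]

theorem Phi_beta_integral_rep_general (μ η η' δ δ' ν ξ ξ' z t s a : ℂ)
    (hμ : 0 < μ.re) (hμν : μ.re < ν.re)
    (hz : ‖z‖ < 1) (ht : ‖t‖ < 1) :
    Phi μ η η' δ δ' ν ξ ξ' z t s a =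
      Complex.Gamma ν / (Complex.Gamma μ * Complex.Gamma (ν - μ)) *
        ∫ y in Ioi (0 : ℝ),
          (y : ℂ) ^ (μ - 1) / (1 + (y : ℂ)) ^ ν *
            Psi η η' δ δ' ξ ξ' (z * y / (1 + y)) (t * y / (1 + y)) s a := by
  have hνμ : 0 < (ν - μ).re := by rw [sub_re]; linarith
  have hPsi : ∀ x : ℝ, Psi η η' δ δ' ξ ξ' (z * x) (t * x) s a =
      ∑' p, psiTerm η η' δ δ' ξ ξ' z t s a p * (x : ℂ) ^ (p.1 + p.2) := fun x ↦ by
    simp only [← psiTerm_mul_mul]; rfl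
  calc Phi μ η η' δ δ' ν ξ ξ' z t s a
    _ = ∑' p, Gamma ν / (Gamma μ * Gamma (ν - μ)) *
          (psiTerm η η' δ δ' ξ ξ' z t s a p * betaIntegral (μ + (p.1 + p.2 : ℕ)) (ν - μ)) := by
      refine tsum_congr fun p ↦ ?_
      rw [mul_left_comm, Gamma_div_mul_betaIntegral_add_nat hμ hμν, psiTerm]
      ring
    _ = Gamma ν / (Gamma μ * Gamma (ν - μ)) * ∫ x in Ioo (0 : ℝ) 1,
          (x : ℂ) ^ (μ - 1) * (1 - (x : ℂ)) ^ (ν - μ - 1) *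
            Psi η η' δ δ' ξ ξ' (z * x) (t * x) s a := by
      rw [tsum_mul_left]
      simp only [hPsi]
      rw [integral_betaKernel_mul_tsum hμ hνμ _ (fun p ↦ p.1 + p.2)
        (summable_norm_psiTerm η η' δ δ' ξ ξ' s a hz ht)]
    _ = _ := by
      rw [← integral_Ioi_cpow_div_one_add_cpow_mul]
      simp only [ofReal_div, ofReal_add, ofReal_one, mul_div_assoc]

theorem Phi_beta_integral_rep (μ η η' δ δ' ν ξ ξ' z t s a : ℂ)
    (hν : ∀ n : ℕ, ν ≠ -(n : ℂ)) (hξ : ∀ n : ℕ, ξ ≠ -(n : ℂ))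
    (hξ' : ∀ n : ℕ, ξ' ≠ -(n : ℂ)) (ha : ∀ n : ℕ, a ≠ -(n : ℂ))
    (hμ : 0 < μ.re) (hμν : μ.re < ν.re)
    (hz : ‖z‖ < 1) (ht : ‖t‖ < 1) :
    Phi μ η η' δ δ' ν ξ ξ' z t s a =
      Complex.Gamma ν / (Complex.Gamma μ * Complex.Gamma (ν - μ)) *
        ∫ y in Ioi (0 : ℝ),
          (y : ℂ) ^ (μ - 1) / (1 + (y : ℂ)) ^ ν *
            Psi η η' δ δ' ξ ξ' (z * y / (1 + y)) (t * y / (1 + y)) s a :=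
  Phi_beta_integral_rep_general μ η η' δ δ' ν ξ ξ' z t s a hμ hμν hz ht
end
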